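/- arXiv:1201.1121 — 4 statements merged into one kernel-verified Lean document; each statement's English description precedes it below -/
import Mathlib

section
/- The program P = { f(g(0)) = S(g(0)), f(x) = g(0) } is coherent but not strongly coherent: P derives no equation m̄ = n̄ between distinct numerals in equational logic, yet the theory A(P) is inconsistent. -/
open FirstOrder Language

universe u v

namespace PRFpaper

variable (L : FirstOrder.Language.{u, v})

/-- The term `0`. -/
def zeroT (c0 : L.Constants) {α : Type} : L.Term α := Term.func c0 ![]

/-- The term `S t`. -/
def succT (s1 : L.Functions 1) {α : Type} (t : L.Term α) : L.Term α := Term.func s1 ![t]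

/-- The numeral `n̄`: `S` applied `n` times to `0`. -/
def num (c0 : L.Constants) (s1 : L.Functions 1) {α : Type} : ℕ → L.Term α
  | 0 => zeroT L c0
  | n + 1 => succT L s1 (num c0 s1 n)

/-- A program: a set of equations, given as pairs of terms with variables in `ℕ`. -/
abbrev Program := Set (L.Term ℕ × L.Term ℕ)

/-- Derivability in equational logic from the program `P`: the equations of `P`,
reflexivity, substitution of arbitrary terms for variables, and replacement of
equal subterms (which generates symmetry, transitivity and congruence). -/
inductive EqDeriv (P : Program L) : L.Term ℕ → L.Term ℕ → Prop
  | ax {s t : L.Term ℕ} : (s, t) ∈ P → EqDeriv P s t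
  | refl (t : L.Term ℕ) : EqDeriv P t t
  | subst {s t : L.Term ℕ} (σ : ℕ → L.Term ℕ) :
      EqDeriv P s t → EqDeriv P (s.subst σ) (t.subst σ)
  | symm {s t : L.Term ℕ} : EqDeriv P s t → EqDeriv P t s
  | trans {s t r : L.Term ℕ} : EqDeriv P s t → EqDeriv P t r → EqDeriv P s r
  | congr {n : ℕ} (f : L.Functions n) (ts us : Fin n → L.Term ℕ) :
      (∀ i, EqDeriv P (ts i) (us i)) → EqDeriv P (Term.func f ts) (Term.func f us)

/-- `P` is coherent: it derives no equation between two distinct numerals. -/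
def Coherent (c0 : L.Constants) (s1 : L.Functions 1) (P : Program L) : Prop :=
  ∀ m n : ℕ, m ≠ n → ¬ EqDeriv L P (num L c0 s1 m) (num L c0 s1 n)

section Semantics

variable (c0 : L.Constants) (s1 : L.Functions 1)
variable (M : Type w) [L.Structure M]

/-- The interpretation of `0` in `M`. -/
def zeroM : M := Structure.funMap c0 Matrix.vecEmpty

/-- The interpretation of `S` in `M`. -/
def succM (x : M) : M := Structure.funMap s1 ![x]

/-- `M` satisfies (the universal closures of) all equations of `P`. -/
def SatP (P : Program L) : Prop :=
  ∀ e ∈ P, ∀ v : ℕ → M, Term.realize v e.1 = Term.realize v e.2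

/-- `M` satisfies the separation axioms `∀x (S x ≠ 0)` and `∀x∀y (S x = S y → x = y)`. -/
def SatSep : Prop :=
  (∀ x : M, succM L s1 M x ≠ zeroM L c0 M) ∧
  (∀ x y : M, succM L s1 M x = succM L s1 M y → x = y)

/-- `M` satisfies every instance of the first-order induction schema
`A[0] → (∀x (A[x] → A[S x])) → ∀x A[x]`. -/
def SatInd : Prop :=
  ∀ (φ : L.BoundedFormula ℕ 1) (v : ℕ → M),
    φ.Realize v ![zeroM L c0 M] →
    (∀ x : M, φ.Realize v ![x] → φ.Realize v ![succM L s1 M x]) →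
    ∀ x : M, φ.Realize v ![x]

end Semantics

/-- `P` is strongly coherent: the theory `A(P)` (universal closures of the
equations of `P`, the separation axioms and full first-order induction) is
consistent, i.e. (by completeness) has a model. -/
def StronglyCoherent (c0 : L.Constants) (s1 : L.Functions 1) (P : Program L) : Prop :=
  ∃ (M : Type (max u v)) (_ : L.Structure M), Nonempty M ∧
    SatP L M P ∧ SatSep L c0 s1 M ∧ SatInd L c0 s1 M

/-- Instantiation of the (outermost) bound variable of a formula with one free
bound variable by a term. -/
def inst1 (φ : L.BoundedFormula ℕ 1) (t : L.Term ℕ) : L.Formula ℕ :=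
  φ.toFormula.subst (Sum.elim Term.var fun _ => t)

/-- Substitute the bound variable of `φ` by a term possibly mentioning the bound
variable, staying a formula with one bound-variable slot. -/
def bsubst (φ : L.BoundedFormula ℕ 1) (t : L.Term (ℕ ⊕ Fin 1)) : L.BoundedFormula ℕ 1 :=
  (φ.toFormula.subst (Sum.elim (fun i => Term.var (Sum.inl i)) fun _ => t)).relabel id

/-- `φ[S x / x]` for the bound variable `x`. -/
def shiftS (s1 : L.Functions 1) (φ : L.BoundedFormula ℕ 1) : L.BoundedFormula ℕ 1 :=
  bsubst L φ (succT L s1 (Term.var (Sum.inr 0)))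

/-- Basic terms: built only from `0`, `S` and variables. -/
inductive IsBasic (c0 : L.Constants) (s1 : L.Functions 1) : L.Term ℕ → Prop
  | var (x : ℕ) : IsBasic c0 s1 (Term.var x)
  | zero : IsBasic c0 s1 (zeroT L c0)
  | succ {t : L.Term ℕ} : IsBasic c0 s1 t → IsBasic c0 s1 (succT L s1 t)

/-- Classical natural deduction with equality, from a theory `T` (whose members
behave as universally closed axioms: their free variables are never eigenvariables)
and open assumptions `Γ`, where the terms used in universal elimination and
existential introduction are restricted to the class `B`. -/
inductive Prv (B : L.Term ℕ → Prop) (T : Set (L.Formula ℕ)) :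
    Set (L.Formula ℕ) → L.Formula ℕ → Prop
  | ax {Γ φ} : φ ∈ T → Prv B T Γ φ
  | hyp {Γ φ} : φ ∈ Γ → Prv B T Γ φ
  | impI {Γ φ ψ} : Prv B T (insert φ Γ) ψ → Prv B T Γ (φ.imp ψ)
  | impE {Γ φ ψ} : Prv B T Γ (φ.imp ψ) → Prv B T Γ φ → Prv B T Γ ψ
  | botE {Γ φ} : Prv B T Γ ⊥ → Prv B T Γ φ
  | dne {Γ φ} : Prv B T Γ φ.not.not → Prv B T Γ φ
  | allI {Γ} {φ : L.BoundedFormula ℕ 1} {y : ℕ} :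
      Prv B T Γ (inst1 L φ (Term.var y)) →
      (∀ ψ ∈ Γ, y ∉ ψ.freeVarFinset) → y ∉ φ.all.freeVarFinset →
      Prv B T Γ φ.all
  | allE {Γ} {φ : L.BoundedFormula ℕ 1} {t} :
      B t → Prv B T Γ φ.all → Prv B T Γ (inst1 L φ t)
  | exI {Γ} {φ : L.BoundedFormula ℕ 1} {t} :
      B t → Prv B T Γ (inst1 L φ t) → Prv B T Γ φ.ex
  | exE {Γ C} {φ : L.BoundedFormula ℕ 1} {y : ℕ} :
      Prv B T Γ φ.ex → Prv B T (insert (inst1 L φ (Term.var y)) Γ) C →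
      (∀ ψ ∈ Γ, y ∉ ψ.freeVarFinset) → y ∉ φ.all.freeVarFinset → y ∉ C.freeVarFinset →
      Prv B T Γ C
  | eqRefl (Γ) (t : L.Term ℕ) : Prv B T Γ (Term.equal t t)
  | eqSubst {Γ} {φ : L.BoundedFormula ℕ 1} {t s : L.Term ℕ} :
      Prv B T Γ (Term.equal t s) → Prv B T Γ (inst1 L φ t) → Prv B T Γ (inst1 L φ s)

/-- The equation `s = t` as a formula (an axiom with free variables, behaving as
its universal closure). -/
def eqAx (e : L.Term ℕ × L.Term ℕ) : L.Formula ℕ := Term.equal e.1 e.2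

/-- The separation axiom `∀x (S x ≠ 0)`. -/
def sepAx1 (c0 : L.Constants) (s1 : L.Functions 1) : L.Formula ℕ :=
  (BoundedFormula.equal (succT L s1 (Term.var (Sum.inr 0))) (zeroT L c0)).not.all

/-- The separation axiom `∀x∀y (S x = S y → x = y)`. -/
def sepAx2 (s1 : L.Functions 1) : L.Formula ℕ :=
  (((BoundedFormula.equal (succT L s1 (Term.var (Sum.inr 0)))
      (succT L s1 (Term.var (Sum.inr 1)))).imp
    (BoundedFormula.equal (Term.var (Sum.inr (0 : Fin 2))) (Term.var (Sum.inr 1)))).all).all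

/-- The induction axiom for the formula `φ`:
`φ[0] → (∀x (φ[x] → φ[S x])) → ∀x φ[x]`. -/
def indAx (c0 : L.Constants) (s1 : L.Functions 1) (φ : L.BoundedFormula ℕ 1) : L.Formula ℕ :=
  (inst1 L φ (zeroT L c0)).imp (((φ.imp (shiftS L s1 φ)).all).imp φ.all)

/-- The axioms of the theory `A(P)`. -/
def TheoryAP (c0 : L.Constants) (s1 : L.Functions 1) (P : Program L) : Set (L.Formula ℕ) :=
  {φ | ∃ e ∈ P, φ = eqAx L e} ∪ {sepAx1 L c0 s1, sepAx2 L s1} ∪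
    Set.range (indAx L c0 s1)

end PRFpaper

namespace PRFpaper

/-- The function symbols of the language of Statement 4: `0`, `S`, `f`, `g`. -/
inductive L4F : ℕ → Type
  | z : L4F 0
  | s : L4F 1
  | f : L4F 1
  | g : L4F 1

/-- The language with `0`, `S` and unary `f`, `g`. -/
def L4 : FirstOrder.Language := ⟨L4F, fun _ => Empty⟩

def L4z : L4.Constants := L4F.z
def L4s : L4.Functions 1 := L4F.s
def L4f : L4.Functions 1 := L4F.f
def L4g : L4.Functions 1 := L4F.g

/-- The program `P = { f(g(0)) = S(g(0)), f(x) = g(0) }`. -/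
def P4 : Program L4 :=
  {(Term.func L4f ![(Term.func L4g ![zeroT L4 L4z])],
     succT L4 L4s (Term.func L4g ![zeroT L4 L4z])),
   (Term.func L4f ![Term.var 0], Term.func L4g ![zeroT L4 L4z])}


/-! ### Auxiliary material for Statement 4 -/

/-- Soundness of equational derivability. -/
lemma eqDeriv_sound {L : FirstOrder.Language.{u, v}} {M : Type w} [L.Structure M]
    {P : Program L} (hP : SatP L M P) {s t : L.Term ℕ} (h : EqDeriv L P s t) :
    ∀ v : ℕ → M, s.realize v = t.realize v := by
  induction h with
  | ax h => exact fun v => hP _ h v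
  | refl t => exact fun v => rfl
  | subst σ h ih =>
      intro v
      simp only [Term.realize_subst]
      exact ih _
  | symm h ih => exact fun v => (ih v).symm
  | trans h1 h2 ih1 ih2 => exact fun v => (ih1 v).trans (ih2 v)
  | congr f ts us h ih =>
      intro v
      simp only [Term.realize_func]
      congr 1
      funext i
      exact ih i v

/-- The model of `P4` used for coherence: `Option ℕ`, with `none` an extra point
satisfying `S ∞ = ∞`, and `f`, `g` constantly `∞`. -/
instance optionNatStructure : L4.Structure (Option ℕ) where
  funMap {n} f := match n, f with
    | 0, L4F.z => fun _ => some 0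
    | 1, L4F.s => fun v => (v 0).map Nat.succ
    | 1, L4F.f => fun _ => none
    | 1, L4F.g => fun _ => none
  RelMap {n} r := Empty.elim r

lemma realize_num_option (v : ℕ → Option ℕ) (n : ℕ) :
    (num L4 L4z L4s (α := ℕ) n).realize v = some n := by
  induction n with
  | zero => rfl
  | succ n ih =>
      show ((num L4 L4z L4s n).realize v).map Nat.succ = some (n + 1)
      rw [ih]
      rfl

lemma satP_option : SatP L4 (Option ℕ) P4 := by
  rintro e (rfl | rfl) v <;> rfl

theorem P4_coherent : Coherent L4 L4z L4s P4 := by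
  intro m n hmn h
  have := eqDeriv_sound satP_option h (fun _ => none)
  rw [realize_num_option, realize_num_option] at this
  exact hmn (Option.some_injective _ this)

/-- The formula `S x ≠ x`. -/
def neqS : L4.BoundedFormula ℕ 1 :=
  ((succT L4 L4s (Term.var (Sum.inr 0))).bdEqual (Term.var (Sum.inr 0))).not

section Model

variable {M : Type w} [L4.Structure M]

lemma realize_neqS (v : ℕ → M) (x : M) :
    neqS.Realize v ![x] ↔ succM L4 L4s M x ≠ x := by
  have h : Structure.funMap (M := M) L4s
      (fun i => Term.realize (Sum.elim v ![x]) ((![Term.var (Sum.inr 0)] : Fin 1 → L4.Term (ℕ ⊕ Fin 1)) i)) =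
      succM L4 L4s M x := by
    unfold succM; congr 1; funext i; fin_cases i; simp
  simp only [neqS, succT, BoundedFormula.realize_not, BoundedFormula.realize_bdEqual,
    Term.realize_func, Term.realize_var, Sum.elim_inr, h, Matrix.cons_val_zero]

lemma realize_un (v : ℕ → M) (u : L4.Functions 1) (t : L4.Term ℕ) :
    (Term.func u ![t]).realize v = Structure.funMap u ![t.realize v] := by
  simp only [Term.realize_func]; congr 1; funext i; fin_cases i; simp

lemma realize_zeroT (v : ℕ → M) :
    (zeroT L4 L4z (α := ℕ)).realize v = zeroM L4 L4z M := by
  simp only [zeroT, zeroM, Term.realize_func]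
  congr 1
  exact funext fun i => i.elim0

end Model

theorem P4_not_stronglyCoherent : ¬ StronglyCoherent L4 L4z L4s P4 := by
  rintro ⟨M, hS, ⟨m0⟩, hP, ⟨hsep1, hsep2⟩, hind⟩
  -- every element differs from its successor, by induction
  have hne : ∀ x : M, succM L4 L4s M x ≠ x := by
    intro x
    have := hind neqS (fun _ => m0) ?_ ?_ x
    · exact (realize_neqS _ _).mp this
    · exact (realize_neqS _ _).mpr (hsep1 _)
    · intro y hy
      rw [realize_neqS] at hy ⊢
      intro h
      exact hy (hsep2 _ _ h)
  set a : M := Structure.funMap L4g ![zeroM L4 L4z M] with ha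
  -- from the equations: S a = f a = a
  have h1 := hP _ (Or.inl rfl) (fun _ => a)
  have h2 := hP _ (Or.inr rfl) (fun _ => a)
  simp only [succT, realize_un, realize_zeroT, Term.realize_var, ← ha] at h1 h2
  -- `h1 : f a = S a`, `h2 : f a = a`
  exact hne a (by rw [succM, ← h1, h2])

/-- The program `P = { f(g(0)) = S(g(0)), f(x) = g(0) }` is
coherent (it derives no equation between distinct numerals in equational logic)
but not strongly coherent (the theory `A(P)` is inconsistent). -/
theorem P4_coherent_not_stronglyCoherent :
    Coherent L4 L4z L4s P4 ∧ ¬ StronglyCoherent L4 L4z L4s P4 :=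
  ⟨P4_coherent, P4_not_stronglyCoherent⟩

end PRFpaper
end

section
/- For every natural number function f computed by a Turing machine (equivalently, every partial recursive total function f), there is a program P extending the defining equations by f(x⃗) = h(k(g(x⃗,y), x⃗, y)) and k(0, x⃗, y) = y — where g is a function symbol for the primitive recursive Kleene T-predicate characteristic function and h extracts the output of a computation trace — such that the standard model ℕ satisfies P when f interprets the symbol f and k is interpreted by k(z, x⃗, u) = u if z = 0 and otherwise the unique y with g(x⃗, y) = 0; hence P is strongly coherent. -/
open FirstOrder Language

universe u v

namespace PRFpaper

/-- Function symbols for Statement 6: `0`, `S`, unary `f`, binary `g`, unary `h`,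
ternary `k`. -/
inductive L6F : ℕ → Type
  | z : L6F 0
  | s : L6F 1
  | f : L6F 1
  | g : L6F 2
  | h : L6F 1
  | k : L6F 3

/-- The language of Statement 6. -/
def L6 : FirstOrder.Language := ⟨L6F, fun _ => Empty⟩

def L6z : L6.Constants := L6F.z
def L6s : L6.Functions 1 := L6F.s
def L6f : L6.Functions 1 := L6F.f
def L6g : L6.Functions 2 := L6F.g
def L6h : L6.Functions 1 := L6F.h
def L6k : L6.Functions 3 := L6F.k

/-- The standard structure on `ℕ` interpreting `f, g, h, k` by the given
functions and `0`, `S` standardly. -/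
def struc6 (f : ℕ → ℕ) (g : ℕ → ℕ → ℕ) (h : ℕ → ℕ) (k : ℕ → ℕ → ℕ → ℕ) :
    L6.Structure ℕ where
  funMap {n} s := match s with
    | .z => fun _ => 0
    | .s => fun a => a 0 + 1
    | .f => fun a => f (a 0)
    | .g => fun a => g (a 0) (a 1)
    | .h => fun a => h (a 0)
    | .k => fun a => k (a 0) (a 1) (a 2)
  RelMap r := r.elim

/-- The program `{ f(x) = h(k(g(x,y),x,y)),  k(0,x,y) = y }`. -/
def P6 : Program L6 :=
  {(Term.func L6f ![Term.var 0],
     Term.func L6h ![(Term.func L6k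
       ![Term.func L6g ![Term.var 0, Term.var 1], Term.var 0, Term.var 1])]),
   (Term.func L6k ![zeroT L6 L6z, Term.var 0, Term.var 1], Term.var 1)}

/-! The Kleene normal form is read off Mathlib's fuelled evaluator `evaln`: a halting trace of
code `c` on input `x` is recognisable primitive recursively, and unique because `evaln` is
monotone in the fuel. If `g x y = 0` then `y` is the trace of `x`, and otherwise `k` jumps to it;
either way `h (k (g x y) x y) = f x`, so `ℕ` is a model of `P6`, of separation and of induction. -/

section Standard

variable {L : FirstOrder.Language.{0, 0}} {c0 : L.Constants} {s1 : L.Functions 1} [L.Structure ℕ]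

theorem satSep_of_standard (h0 : zeroM L c0 ℕ = 0) (hS : ∀ n, succM L s1 ℕ n = n + 1) :
    SatSep L c0 s1 ℕ := by
  refine ⟨fun x => ?_, fun x y hxy => ?_⟩
  · rw [h0, hS]
    exact Nat.succ_ne_zero x
  · rw [hS, hS] at hxy
    exact Nat.succ_injective hxy

theorem satInd_of_standard (h0 : zeroM L c0 ℕ = 0) (hS : ∀ n, succM L s1 ℕ n = n + 1) :
    SatInd L c0 s1 ℕ := by
  intro φ v hzero hstep x
  induction x with
  | zero => simpa only [h0] using hzero
  | succ n ih => simpa only [hS] using hstep n ih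

theorem stronglyCoherent_of_standard {P : Program L} (h0 : zeroM L c0 ℕ = 0)
    (hS : ∀ n, succM L s1 ℕ n = n + 1) (hP : SatP L ℕ P) : StronglyCoherent L c0 s1 P :=
  ⟨ℕ, inferInstance, ⟨0⟩, hP, satSep_of_standard h0 hS, satInd_of_standard h0 hS⟩

end Standard

theorem satP_struc6_P6 {f : ℕ → ℕ} {g : ℕ → ℕ → ℕ} {h : ℕ → ℕ} {k : ℕ → ℕ → ℕ → ℕ}
    (hf : ∀ x y, f x = h (k (g x y) x y)) (hk : ∀ x y, k 0 x y = y) :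
    letI : L6.Structure ℕ := struc6 f g h k
    SatP L6 ℕ P6 := by
  rintro e (rfl | rfl) v
  · exact hf (v 0) (v 1)
  · exact hk (v 0) (v 1)

theorem stronglyCoherent_P6 (f : ℕ → ℕ) (g : ℕ → ℕ → ℕ) (h : ℕ → ℕ) (k : ℕ → ℕ → ℕ → ℕ)
    (hP : letI : L6.Structure ℕ := struc6 f g h k; SatP L6 ℕ P6) :
    StronglyCoherent L6 L6z L6s P6 :=
  letI : L6.Structure ℕ := struc6 f g h k
  stronglyCoherent_of_standard rfl (fun _ => rfl) hP

section HaltingTrace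

open Nat.Partrec (Code)
open Nat.Partrec.Code

/-- `y = ⟪s, v⟫` codes the halting computation of `c` on `x` when `s` is the least fuel with
which `evaln` halts and `v` is its output. -/
def IsHaltingTrace (c : Code) (x y : ℕ) : Prop :=
  evaln y.unpair.1 c x = some y.unpair.2 ∧ evaln (y.unpair.1 - 1) c x = none

instance (c : Code) (x : ℕ) : DecidablePred (IsHaltingTrace c x) :=
  fun _ => inferInstanceAs (Decidable (_ ∧ _))

variable {c : Code} {x y y' : ℕ}

theorem IsHaltingTrace.mem_eval (hy : IsHaltingTrace c x y) : y.unpair.2 ∈ eval c x :=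
  evaln_sound hy.1

theorem IsHaltingTrace.fuel_le (hy : IsHaltingTrace c x y) (hy' : IsHaltingTrace c x y') :
    y.unpair.1 ≤ y'.unpair.1 := by
  by_contra! hlt
  have := evaln_mono (Nat.le_sub_one_of_lt hlt) hy'.1
  rw [hy.2] at this
  exact Option.not_mem_none _ this

theorem IsHaltingTrace.unique (hy : IsHaltingTrace c x y) (hy' : IsHaltingTrace c x y') :
    y = y' := by
  have hfuel : y.unpair.1 = y'.unpair.1 := le_antisymm (hy.fuel_le hy') (hy'.fuel_le hy)
  have hval : y.unpair.2 = y'.unpair.2 := Part.mem_unique hy.mem_eval hy'.mem_eval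
  rw [← Nat.pair_unpair y, ← Nat.pair_unpair y', hfuel, hval]

theorem exists_isHaltingTrace (hx : (eval c x).Dom) : ∃ y, IsHaltingTrace c x y := by
  have hhalts : ∃ s, (evaln s c x).isSome := by
    obtain ⟨s, hs⟩ := evaln_complete.1 (Part.get_mem hx)
    exact ⟨s, Option.isSome_iff_exists.2 ⟨_, hs⟩⟩
  classical
  obtain ⟨v, hv⟩ := Option.isSome_iff_exists.1 (Nat.find_spec hhalts)
  have hpos : 0 < Nat.find hhalts := by
    by_contra! hzero
    simp [Nat.le_zero.1 hzero, evaln] at hv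
  refine ⟨Nat.pair (Nat.find hhalts) v, ?_, ?_⟩ <;> simp only [Nat.unpair_pair]
  · exact hv
  · exact Option.not_isSome_iff_eq_none.1 (Nat.find_min hhalts (Nat.sub_one_lt_of_lt hpos))

theorem primrecPred_isHaltingTrace (c : Code) :
    PrimrecPred fun p : ℕ × ℕ => IsHaltingTrace c p.1 p.2 := by
  have hfuel : Primrec fun p : ℕ × ℕ => p.2.unpair.1 :=
    Primrec.fst.comp (Primrec.unpair.comp .snd)
  have hrun : Primrec₂ fun (p : ℕ × ℕ) (s : ℕ) => evaln s c p.1 :=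
    primrec_evaln.comp ((Primrec.snd.pair (Primrec.const c)).pair (Primrec.fst.comp .fst))
  refine PrimrecPred.and ?_ ?_
  · exact Primrec.eq.comp (hrun.comp .id hfuel)
      (Primrec.option_some.comp (Primrec.snd.comp (Primrec.unpair.comp .snd)))
  · exact Primrec.eq.comp (hrun.comp .id (Primrec.nat_sub.comp hfuel (Primrec.const 1)))
      (Primrec.const none)

end HaltingTrace

open Nat.Partrec.Code in
/-- For every total computable `f : ℕ → ℕ` there are a primitive
recursive `g` (the characteristic function of the Kleene `T`-predicate, so that
for every `x` there is exactly one `y` with `g x y = 0`) and a primitive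
recursive `h` extracting the output from a computation trace with `f x = h y`,
and an interpretation `k` with `k 0 x u = u` and `k z x u =` the unique zero of
`g x` for `z ≠ 0`, such that the standard model `ℕ` satisfies the program
`P = { f(x) = h(k(g(x,y),x,y)), k(0,x,y) = y }`; hence `P` is strongly coherent. -/
theorem stmt6 (f : ℕ → ℕ) (hf : Computable f) :
    ∃ (g : ℕ → ℕ → ℕ) (h : ℕ → ℕ) (k : ℕ → ℕ → ℕ → ℕ),
      Primrec₂ g ∧ Primrec h ∧
      (∀ x, ∃! y, g x y = 0) ∧
      (∀ x y, g x y = 0 → f x = h y) ∧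
      (∀ x u, k 0 x u = u) ∧
      (∀ z x u, z ≠ 0 → g x (k z x u) = 0) ∧
      (letI : L6.Structure ℕ := struc6 f g h k
       SatP L6 ℕ P6) ∧
      StronglyCoherent L6 L6z L6s P6 := by
  obtain ⟨c, hc⟩ := exists_code.1 (Partrec.nat_iff.1 hf.partrec)
  have hmem : ∀ x, f x ∈ eval c x := fun x => by simp [hc]
  choose trace htrace using fun x =>
    exists_isHaltingTrace (c := c) (Part.dom_iff_mem.2 ⟨_, hmem x⟩)
  let g (x y : ℕ) : ℕ := if IsHaltingTrace c x y then 0 else 1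
  let h (y : ℕ) : ℕ := y.unpair.2
  let k (z x u : ℕ) : ℕ := if z = 0 then u else trace x
  have hg : ∀ x y, g x y = 0 ↔ IsHaltingTrace c x y := fun x y => by simp [g]
  have hgh : ∀ x y, g x y = 0 → f x = h y := fun x y hy =>
    Part.mem_unique (hmem x) ((hg x y).1 hy).mem_eval
  have hgk : ∀ z x u, z ≠ 0 → g x (k z x u) = 0 := fun z x u hz => by
    simpa [k, hz] using (hg x _).2 (htrace x)
  have hk0 : ∀ x u, k 0 x u = u := fun _ _ => if_pos rfl
  have hP : letI : L6.Structure ℕ := struc6 f g h k; SatP L6 ℕ P6 := by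
    refine satP_struc6_P6 (fun x y => ?_) hk0
    by_cases hxy : g x y = 0
    · rw [hxy, hk0]; exact hgh x y hxy
    · exact hgh x _ (hgk _ x y hxy)
  refine ⟨g, h, k, Primrec.ite (primrecPred_isHaltingTrace c) (.const 0) (.const 1),
    Primrec.snd.comp Primrec.unpair, fun x => ⟨trace x, (hg x _).2 (htrace x), fun y hy =>
      ((hg x y).1 hy).unique (htrace x)⟩, hgh, hk0, hgk, hP, stronglyCoherent_P6 f g h k hP⟩

end PRFpaper
end

section
/- In the intrinsic theory IT(ℕ) (first-order logic with equality, symbols 0, S and a unary predicate N, with rules N(0), N(t) → N(S t), and the induction rule: from N(t), A[0], and ∀x (A[x] → A[S x]) infer A[t]), the relativized induction schema is derivable: B^N[0] → ∀y (N(y) → B^N[y] → B^N[S y]) → ∀y (N(y) → B^N[y]) for every formula B. -/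
open FirstOrder Language

universe u v

namespace PRFpaper

/-- Relativization `A ↦ A^N` of all quantifiers to the unary predicate `nr`:
`∀x B` becomes `∀x (N(x) → B)` (and hence the defined `∃x B = ¬∀x¬B` becomes
`¬∀x (N(x) → ¬B)`, which is `∃x (N(x) ∧ B)`). -/
def relativize {L : FirstOrder.Language} (nr : L.Relations 1) :
    ∀ {n}, L.BoundedFormula ℕ n → L.BoundedFormula ℕ n
  | _, BoundedFormula.falsum => BoundedFormula.falsum
  | _, BoundedFormula.equal a b => BoundedFormula.equal a b
  | _, BoundedFormula.rel R ts => BoundedFormula.rel R ts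
  | _, BoundedFormula.imp f g => (relativize nr f).imp (relativize nr g)
  | _, BoundedFormula.all f =>
      ((BoundedFormula.rel nr ![Term.var (Sum.inr (Fin.last _))]).imp
        (relativize nr f)).all

/-- Function symbols of the language of intrinsic theories: `0` and `S`. -/
inductive LNF : ℕ → Type
  | z : LNF 0
  | s : LNF 1

/-- Relation symbols: the data predicate `N`. -/
inductive LNR : ℕ → Type
  | N : LNR 1

/-- The language `{0, S, N}` of the intrinsic theory of natural numbers. -/
def LN : FirstOrder.Language := ⟨LNF, LNR⟩

def LNz : LN.Constants := LNF.z
def LNs : LN.Functions 1 := LNF.s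

/-- The atomic formula `N(t)` for a term `t`. -/
def NT (t : LN.Term ℕ) : LN.Formula ℕ :=
  BoundedFormula.rel LNR.N ![t.relabel Sum.inl]

/-- The atomic bounded formula `N(t)`. -/
def NB {n : ℕ} (t : LN.Term (ℕ ⊕ Fin n)) : LN.BoundedFormula ℕ n :=
  BoundedFormula.rel LNR.N ![t]

/-- Provability in the (discrete) intrinsic theory `IT(ℕ)`: classical natural
deduction with equality and unrestricted quantifier rules, from a theory `T`
and open assumptions, plus the data rules `N(0)`, `N(t) → N(S t)` and the
induction rule: from `N(t)`, `A[0]` and `∀x (A[x] → A[S x])` infer `A[t]`. -/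
inductive PrvIT (T : Set (LN.Formula ℕ)) :
    Set (LN.Formula ℕ) → LN.Formula ℕ → Prop
  | ax {Γ φ} : φ ∈ T → PrvIT T Γ φ
  | hyp {Γ φ} : φ ∈ Γ → PrvIT T Γ φ
  | impI {Γ φ ψ} : PrvIT T (insert φ Γ) ψ → PrvIT T Γ (φ.imp ψ)
  | impE {Γ φ ψ} : PrvIT T Γ (φ.imp ψ) → PrvIT T Γ φ → PrvIT T Γ ψ
  | botE {Γ φ} : PrvIT T Γ ⊥ → PrvIT T Γ φ
  | dne {Γ φ} : PrvIT T Γ φ.not.not → PrvIT T Γ φ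
  | allI {Γ} {φ : LN.BoundedFormula ℕ 1} {y : ℕ} :
      PrvIT T Γ (inst1 LN φ (Term.var y)) →
      (∀ ψ ∈ Γ, y ∉ ψ.freeVarFinset) → y ∉ φ.all.freeVarFinset →
      PrvIT T Γ φ.all
  | allE {Γ} {φ : LN.BoundedFormula ℕ 1} (t : LN.Term ℕ) :
      PrvIT T Γ φ.all → PrvIT T Γ (inst1 LN φ t)
  | exI {Γ} {φ : LN.BoundedFormula ℕ 1} (t : LN.Term ℕ) :
      PrvIT T Γ (inst1 LN φ t) → PrvIT T Γ φ.ex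
  | exE {Γ C} {φ : LN.BoundedFormula ℕ 1} {y : ℕ} :
      PrvIT T Γ φ.ex → PrvIT T (insert (inst1 LN φ (Term.var y)) Γ) C →
      (∀ ψ ∈ Γ, y ∉ ψ.freeVarFinset) → y ∉ φ.all.freeVarFinset →
      y ∉ C.freeVarFinset → PrvIT T Γ C
  | eqRefl (Γ) (t : LN.Term ℕ) : PrvIT T Γ (Term.equal t t)
  | eqSubst {Γ} {φ : LN.BoundedFormula ℕ 1} {t s : LN.Term ℕ} :
      PrvIT T Γ (Term.equal t s) → PrvIT T Γ (inst1 LN φ t) →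
      PrvIT T Γ (inst1 LN φ s)
  | nZero (Γ) : PrvIT T Γ (NT (zeroT LN LNz))
  | nSucc {Γ} {t : LN.Term ℕ} : PrvIT T Γ (NT t) → PrvIT T Γ (NT (succT LN LNs t))
  | nInd {Γ} {φ : LN.BoundedFormula ℕ 1} {t : LN.Term ℕ} :
      PrvIT T Γ (NT t) → PrvIT T Γ (inst1 LN φ (zeroT LN LNz)) →
      PrvIT T Γ ((φ.imp (shiftS LN LNs φ)).all) →
      PrvIT T Γ (inst1 LN φ t)

end PRFpaper

/-!
The induction rule yields `A[t]` from `N(t)`, `A[0]` and `∀x (A[x] → A[S x])`, but the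
relativized step hypothesis only gives `A[S x]` under `N(x)`. So the rule is applied to
`N(x) ∧ A[x]` (Mathlib's `⊓`, i.e. `¬(N(x) → ¬A[x])`), whose step case follows from the rule
`N(x) ⊢ N(S x)`. The eigenvariables are chosen outside the finitely many free variables of `A`.
-/

namespace FirstOrder.Language

variable {L : Language.{u, v}}

namespace Term

variable {α β γ : Type*} [DecidableEq α] [DecidableEq β]

theorem varFinset_relabel (g : α → β) (t : L.Term α) :
    (t.relabel g).varFinset = t.varFinset.image g := by
  induction t with
  | var => simp [varFinset]
  | func f ts ih => simp [varFinset, ih, Finset.biUnion_image]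

theorem varFinset_subst (t : L.Term α) (τ : α → L.Term β) :
    (t.subst τ).varFinset = t.varFinset.biUnion fun a => (τ a).varFinset := by
  induction t with
  | var => simp [varFinset]
  | func f ts ih => simp [varFinset, ih, Finset.biUnion_biUnion]

theorem mem_varFinsetLeft_iff [DecidableEq γ] {t : L.Term (α ⊕ γ)} {a : α} :
    a ∈ t.varFinsetLeft ↔ Sum.inl a ∈ t.varFinset := by
  induction t with
  | var c => cases c <;> simp [varFinset, varFinsetLeft]
  | func f ts ih => simp [varFinset, varFinsetLeft, ih]

end Term

namespace BoundedFormula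

variable {α β : Type*} [DecidableEq α] [DecidableEq β]

theorem mem_freeVarFinset_mapTermRel {L' : Language} {g : ℕ → ℕ}
    {ft : ∀ n, L.Term (α ⊕ Fin n) → L'.Term (β ⊕ Fin (g n))}
    {fr : ∀ n, L.Relations n → L'.Relations n}
    {h : ∀ n, L'.BoundedFormula β (g (n + 1)) → L'.BoundedFormula β (g n + 1)}
    (R : α → β → Prop)
    (hft : ∀ n t b, b ∈ (ft n t).varFinsetLeft → ∃ a ∈ t.varFinsetLeft, R a b)
    (hh : ∀ n ψ, (h n ψ).freeVarFinset ⊆ ψ.freeVarFinset) {n : ℕ}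
    (φ : L.BoundedFormula α n) {b : β} (hb : b ∈ (φ.mapTermRel ft fr h).freeVarFinset) :
    ∃ a ∈ φ.freeVarFinset, R a b := by
  induction φ with
  | falsum => simp [mapTermRel, freeVarFinset] at hb
  | equal t₁ t₂ =>
    simp only [mapTermRel, freeVarFinset, Finset.mem_union] at hb ⊢
    rcases hb with hb | hb <;> obtain ⟨a, ha, hab⟩ := hft _ _ _ hb
    exacts [⟨a, .inl ha, hab⟩, ⟨a, .inr ha, hab⟩]
  | rel R ts =>
    simp only [mapTermRel, freeVarFinset, Finset.mem_biUnion, Finset.mem_univ, true_and] at hb ⊢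
    obtain ⟨i, hi⟩ := hb
    obtain ⟨a, ha, hab⟩ := hft _ _ _ hi
    exact ⟨a, ⟨i, ha⟩, hab⟩
  | imp φ₁ φ₂ ih₁ ih₂ =>
    simp only [mapTermRel, freeVarFinset, Finset.mem_union] at hb ⊢
    rcases hb with hb | hb
    · obtain ⟨a, ha, hab⟩ := ih₁ hb
      exact ⟨a, .inl ha, hab⟩
    · obtain ⟨a, ha, hab⟩ := ih₂ hb
      exact ⟨a, .inr ha, hab⟩
  | all φ ih => exact ih (hh _ _ hb)

theorem freeVarFinset_castLE {m n : ℕ} (hmn : m ≤ n) (φ : L.BoundedFormula α m) :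
    (φ.castLE hmn).freeVarFinset = φ.freeVarFinset := by
  have hterm : ∀ {k l : ℕ} (f : Fin k → Fin l) (t : L.Term (α ⊕ Fin k)),
      (t.relabel (Sum.map id f)).varFinsetLeft = t.varFinsetLeft := by
    intro k l f t
    ext a
    simp [Term.mem_varFinsetLeft_iff, Term.varFinset_relabel]
  induction φ generalizing n with
  | falsum => rfl
  | equal t₁ t₂ => simp [castLE, freeVarFinset, hterm]
  | rel R ts => simp [castLE, freeVarFinset, hterm]
  | imp φ₁ φ₂ ih₁ ih₂ => simp [castLE, freeVarFinset, ih₁, ih₂]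
  | all φ ih => simp [castLE, freeVarFinset, ih]

theorem mem_freeVarFinset_relabel {m k : ℕ} (g : α → β ⊕ Fin m) (φ : L.BoundedFormula α k)
    {b : β} (hb : b ∈ (φ.relabel g).freeVarFinset) :
    ∃ a ∈ φ.freeVarFinset, g a = Sum.inl b := by
  refine mem_freeVarFinset_mapTermRel (fun a b => g a = Sum.inl b) (fun n t b hb => ?_)
    (fun _ ψ => (freeVarFinset_castLE _ ψ).subset) φ hb
  simp only [Term.mem_varFinsetLeft_iff, Term.varFinset_relabel, Finset.mem_image] at hb
  obtain ⟨c | j, hc, hcb⟩ := hb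
  · refine ⟨c, Term.mem_varFinsetLeft_iff.2 hc, ?_⟩
    rcases hgc : g c with b' | j' <;> simp_all [relabelAux]
  · simp [relabelAux] at hcb

theorem mem_freeVarFinset_subst {n : ℕ} (φ : L.BoundedFormula α n) (σ : α → L.Term β)
    {b : β} (hb : b ∈ (φ.subst σ).freeVarFinset) :
    ∃ a ∈ φ.freeVarFinset, b ∈ (σ a).varFinset := by
  refine mem_freeVarFinset_mapTermRel (g := id) (fun a b => b ∈ (σ a).varFinset)
    (fun n t b hb => ?_) (fun _ _ => subset_rfl) φ hb
  simp only [Term.mem_varFinsetLeft_iff, Term.varFinset_subst, Finset.mem_biUnion] at hb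
  obtain ⟨c | j, hc, hcb⟩ := hb
  · exact ⟨c, Term.mem_varFinsetLeft_iff.2 hc, by simpa [Term.varFinset_relabel] using hcb⟩
  · simp [Term.varFinset] at hcb

theorem mem_freeVarFinset_of_inl_mem_toFormula {n : ℕ} (φ : L.BoundedFormula α n) {a : α}
    (ha : Sum.inl a ∈ φ.toFormula.freeVarFinset) : a ∈ φ.freeVarFinset := by
  induction φ with
  | falsum => simp [freeVarFinset] at ha
  | equal t₁ t₂ =>
    simpa [Term.equal, Term.bdEqual, freeVarFinset, Term.mem_varFinsetLeft_iff,
      Term.varFinset_relabel] using ha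
  | rel R ts =>
    simpa [Relations.formula, Relations.boundedFormula, freeVarFinset,
      Term.mem_varFinsetLeft_iff, Term.varFinset_relabel] using ha
  | imp φ₁ φ₂ ih₁ ih₂ =>
    simp only [toFormula, freeVarFinset, Finset.mem_union] at ha ⊢
    exact ha.imp ih₁ ih₂
  | all φ ih =>
    obtain ⟨c | j, hc, hca⟩ := mem_freeVarFinset_relabel _ _ ha
    · simp only [Sum.elim_inl, Function.comp_apply, Sum.inl.injEq] at hca
      exact ih (hca ▸ hc)
    · rcases hj : finSumFinEquiv.symm j with j' | j' <;> simp [hj] at hca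

theorem freeVarFinset_inf {n : ℕ} (φ ψ : L.BoundedFormula α n) :
    (φ ⊓ ψ).freeVarFinset = φ.freeVarFinset ∪ ψ.freeVarFinset := by
  simp [min, BoundedFormula.not, freeVarFinset]

end BoundedFormula

end FirstOrder.Language

namespace PRFpaper

variable {L : FirstOrder.Language}

theorem freeVarFinset_inst1_subset (φ : L.BoundedFormula ℕ 1) (t : L.Term ℕ) :
    (inst1 L φ t).freeVarFinset ⊆ φ.freeVarFinset ∪ t.varFinset := by
  intro b hb
  obtain ⟨i | _, hi, hbi⟩ := BoundedFormula.mem_freeVarFinset_subst _ _ hb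
  · rw [Sum.elim_inl, Term.varFinset, Finset.mem_singleton] at hbi
    exact Finset.mem_union_left _
      (hbi ▸ BoundedFormula.mem_freeVarFinset_of_inl_mem_toFormula _ hi)
  · exact Finset.mem_union_right _ hbi

theorem notMem_freeVarFinset_inst1 {φ : L.BoundedFormula ℕ 1} {t : L.Term ℕ} {x : ℕ}
    (hφ : x ∉ φ.freeVarFinset) (ht : x ∉ t.varFinset) : x ∉ (inst1 L φ t).freeVarFinset :=
  fun hx => (Finset.mem_union.1 (freeVarFinset_inst1_subset φ t hx)).elim hφ ht

theorem freeVarFinset_shiftS_subset (s1 : L.Functions 1) (φ : L.BoundedFormula ℕ 1) :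
    (shiftS L s1 φ).freeVarFinset ⊆ φ.freeVarFinset := by
  intro b hb
  obtain ⟨c, hc, rfl⟩ := BoundedFormula.mem_freeVarFinset_relabel _ _ hb
  obtain ⟨i | _, hi, hbi⟩ := BoundedFormula.mem_freeVarFinset_subst _ _ hc
  · simp only [Sum.elim_inl, Term.varFinset, Finset.mem_singleton, Sum.inl.injEq] at hbi
    exact hbi ▸ BoundedFormula.mem_freeVarFinset_of_inl_mem_toFormula _ hi
  · simp [succT, Term.varFinset] at hbi

theorem notMem_freeVarFinset_shiftS {s1 : L.Functions 1} {φ : L.BoundedFormula ℕ 1} {x : ℕ}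
    (hφ : x ∉ φ.freeVarFinset) : x ∉ (shiftS L s1 φ).freeVarFinset :=
  fun hx => hφ (freeVarFinset_shiftS_subset s1 φ hx)

theorem varFinset_zeroT {α : Type} [DecidableEq α] (c0 : L.Constants) :
    (zeroT L c0 : L.Term α).varFinset = ∅ := by
  simp [zeroT, Term.varFinset]

theorem inst1_inf (φ ψ : L.BoundedFormula ℕ 1) (t : L.Term ℕ) :
    inst1 L (φ ⊓ ψ) t = inst1 L φ t ⊓ inst1 L ψ t := rfl

theorem inst1_imp (φ ψ : L.BoundedFormula ℕ 1) (t : L.Term ℕ) :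
    inst1 L (φ.imp ψ) t = (inst1 L φ t).imp (inst1 L ψ t) := rfl

theorem shiftS_inf (s1 : L.Functions 1) (φ ψ : L.BoundedFormula ℕ 1) :
    shiftS L s1 (φ ⊓ ψ) = shiftS L s1 φ ⊓ shiftS L s1 ψ := rfl

theorem freeVarFinset_NT (t : LN.Term ℕ) : (NT t).freeVarFinset = t.varFinset := by
  ext
  simp [NT, BoundedFormula.freeVarFinset, Term.mem_varFinsetLeft_iff, Term.varFinset_relabel]

theorem freeVarFinset_NB_var {n : ℕ} (j : Fin n) :
    (NB (Term.var (Sum.inr j)) : LN.BoundedFormula ℕ n).freeVarFinset = ∅ := by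
  simp [NB, BoundedFormula.freeVarFinset, Term.varFinsetLeft]

theorem inst1_NB (t : LN.Term ℕ) : inst1 LN (NB (Term.var (Sum.inr 0))) t = NT t := by
  simp only [inst1, NB, NT, BoundedFormula.toFormula, BoundedFormula.subst,
    BoundedFormula.mapTermRel, Relations.formula, Relations.boundedFormula]
  congr 1
  funext i
  fin_cases i
  rfl

theorem inst1_NB_succT (t : LN.Term ℕ) :
    inst1 LN (NB (succT LN LNs (Term.var (Sum.inr 0)))) t = NT (succT LN LNs t) := by
  simp only [inst1, NB, NT, BoundedFormula.toFormula, BoundedFormula.subst,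
    BoundedFormula.mapTermRel, Relations.formula, Relations.boundedFormula]
  congr 1
  funext i
  fin_cases i
  simp [succT]

theorem shiftS_NB :
    shiftS LN LNs (NB (Term.var (Sum.inr 0))) = NB (succT LN LNs (Term.var (Sum.inr 0))) := by
  simp only [shiftS, bsubst, NB, BoundedFormula.toFormula, BoundedFormula.subst,
    BoundedFormula.mapTermRel, BoundedFormula.relabel, Relations.formula, Relations.boundedFormula]
  congr 1
  funext i
  fin_cases i
  simp [succT]
  funext j
  fin_cases j
  rfl

namespace PrvIT

variable {T Γ : Set (LN.Formula ℕ)} {φ ψ : LN.Formula ℕ}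

theorem infI (h₁ : PrvIT T Γ φ) (h₂ : PrvIT T Γ ψ) : PrvIT T Γ (φ ⊓ ψ) :=
  impE (impE (impI <| impI <| impI <|
    impE (φ := ψ) (impE (φ := φ) (hyp (.inl rfl)) (hyp (.inr (.inr (.inl rfl)))))
      (hyp (.inr (.inl rfl)))) h₁) h₂

theorem infE_left (h : PrvIT T Γ (φ ⊓ ψ)) : PrvIT T Γ φ :=
  impE (impI <| dne <| impI <| impE (φ := φ.imp ψ.not) (hyp (.inr (.inl rfl))) <| impI <| impI <|
    impE (φ := φ) (hyp (.inr (.inr (.inl rfl)))) (hyp (.inr (.inl rfl)))) h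

theorem infE_right (h : PrvIT T Γ (φ ⊓ ψ)) : PrvIT T Γ ψ :=
  impE (impI <| dne <| impI <| impE (φ := φ.imp ψ.not) (hyp (.inr (.inl rfl))) <| impI <|
    hyp (.inr (.inl rfl))) h

theorem inf_imp_inf_succT {t : LN.Term ℕ} (h : PrvIT T Γ ((NT t).imp (φ.imp ψ))) :
    PrvIT T Γ ((NT t ⊓ φ).imp (NT (succT LN LNs t) ⊓ ψ)) :=
  impE (impI <| impI <| infI (nSucc (infE_left (hyp (.inl rfl))))
    (impE (impE (hyp (.inr (.inl rfl))) (infE_left (hyp (.inl rfl))))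
      (infE_right (hyp (.inl rfl))))) h

theorem nIndRel {A : LN.BoundedFormula ℕ 1} {t : LN.Term ℕ} {z : ℕ}
    (hzΓ : ∀ χ ∈ Γ, z ∉ χ.freeVarFinset) (hzA : z ∉ A.freeVarFinset)
    (ht : PrvIT T Γ (NT t)) (h0 : PrvIT T Γ (inst1 LN A (zeroT LN LNz)))
    (hstep : PrvIT T Γ (((NB (Term.var (Sum.inr 0))).imp (A.imp (shiftS LN LNs A))).all)) :
    PrvIT T Γ (inst1 LN A t) := by
  have base : PrvIT T Γ (inst1 LN (NB (Term.var (Sum.inr 0)) ⊓ A) (zeroT LN LNz)) := by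
    rw [inst1_inf, inst1_NB]
    exact infI (nZero Γ) h0
  have step : PrvIT T Γ (((NB (Term.var (Sum.inr 0)) ⊓ A).imp
      (shiftS LN LNs (NB (Term.var (Sum.inr 0)) ⊓ A))).all) := by
    refine allI (y := z) ?_ hzΓ ?_
    · have hz := allE (Term.var z) hstep
      rw [inst1_imp, inst1_imp, inst1_NB] at hz
      rw [inst1_imp, shiftS_inf, shiftS_NB, inst1_inf, inst1_inf, inst1_NB, inst1_NB_succT]
      exact inf_imp_inf_succT hz
    · simp [BoundedFormula.freeVarFinset, BoundedFormula.freeVarFinset_inf, freeVarFinset_NB_var,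
        notMem_freeVarFinset_shiftS, hzA]
  have hconj := nInd ht base step
  rw [inst1_inf] at hconj
  exact infE_right hconj

end PrvIT

/-- In the intrinsic theory `IT(ℕ)` the relativized induction
schema is derivable:
`B^N[0] → ∀y (N(y) → B^N[y] → B^N[S y]) → ∀y (N(y) → B^N[y])`
for every formula `B`. -/
theorem relativized_induction_derivable_in_IT (B : LN.BoundedFormula ℕ 1) :
    PrvIT ∅ ∅
      ((inst1 LN (relativize LNR.N B) (zeroT LN LNz)).imp
        ((((NB (Term.var (Sum.inr 0))).imp
            ((relativize LNR.N B).imp (shiftS LN LNs (relativize LNR.N B)))).all).imp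
          (((NB (Term.var (Sum.inr 0))).imp (relativize LNR.N B)).all))) := by
  set A := relativize LNR.N B
  obtain ⟨y, hy⟩ := Infinite.exists_notMem_finset A.freeVarFinset
  obtain ⟨z, hz⟩ := Infinite.exists_notMem_finset (insert y A.freeVarFinset)
  rw [Finset.mem_insert, not_or] at hz
  refine .impI <| .impI <| .allI (y := y) ?_ ?_ ?_
  · rw [inst1_imp, inst1_NB]
    refine .impI <| .nIndRel (z := z) ?_ hz.2 (.hyp (.inl rfl)) (.hyp (.inr (.inr (.inl rfl))))
      (.hyp (.inr (.inl rfl)))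
    simp [BoundedFormula.freeVarFinset, freeVarFinset_NT, freeVarFinset_NB_var, Term.varFinset,
      notMem_freeVarFinset_inst1, notMem_freeVarFinset_shiftS, varFinset_zeroT, hz.1, hz.2]
  · simp [BoundedFormula.freeVarFinset, freeVarFinset_NB_var, notMem_freeVarFinset_inst1,
      notMem_freeVarFinset_shiftS, varFinset_zeroT, hy]
  · simp [BoundedFormula.freeVarFinset, freeVarFinset_NB_var, hy]

end PRFpaper
end

section
/- If a function f : ℕ → ℕ is defined by composition f = h ∘ g from functions g, h for which totality is provable with basic terms (i.e., A(PR) ⊢_b ∀x ∃y g(x) = y and A(PR) ⊢_b ∀y ∃z h(y) = z), then totality of f is provable with basic terms: A(PR) ⊢_b ∀x ∃z h(g(x)) = z. -/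
open FirstOrder Language

universe u v

namespace PRFpaper

/-- The totality formula `∀x ∃y (g(x) = y)` for a unary function symbol `g`. -/
def tot1 (L : FirstOrder.Language.{u, v}) (g : L.Functions 1) : L.Formula ℕ :=
  (((BoundedFormula.equal (Term.func g ![Term.var (Sum.inr (0 : Fin 2))])
      (Term.var (Sum.inr (1 : Fin 2)))).ex).all)

/-- The totality formula `∀x ∃z (h(g(x)) = z)` for the composition. -/
def totComp (L : FirstOrder.Language.{u, v}) (g h : L.Functions 1) : L.Formula ℕ :=
  (((BoundedFormula.equal
      (Term.func h ![(Term.func g ![Term.var (Sum.inr (0 : Fin 2))])])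
      (Term.var (Sum.inr (1 : Fin 2)))).ex).all)

end PRFpaper

/-!
Fix a variable `x`. Instantiating the totality of `g` at `x` gives `∃y g(x) = y`; eliminating
it with a fresh `y` and instantiating the totality of `h` at `y` gives `∃z h(y) = z`; eliminating
that with a fresh `z`, equality replacement turns `h(y) = z` into `h(g(x)) = z`, whence
`∃z h(g(x)) = z`.
Only variables are ever instantiated, so every `∀E`/`∃I` term is basic. The calculus has no
weakening rule, so the two closed totality proofs are brought into the context of the
`∃E`-derivation by `→I` followed by `→E`.
-/

namespace FirstOrder.Language.Term

variable {L : FirstOrder.Language.{u, v}} {α β γ : Type*}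

theorem subst_var (t : L.Term α) : t.subst Term.var = t := by
  induction t with
  | var => rfl
  | func f ts ih => simp [ih]

theorem subst_relabel (t : L.Term α) (f : α → β) (σ : β → L.Term γ) :
    (t.relabel f).subst σ = t.subst (σ ∘ f) := by
  induction t with
  | var => rfl
  | func f ts ih => simp [ih]

theorem relabel_subst (t : L.Term α) (σ : α → L.Term β) (f : β → γ) :
    (t.subst σ).relabel f = t.subst (Term.relabel f ∘ σ) := by
  induction t with
  | var => rfl
  | func f ts ih => simp [ih]

theorem relabel_inl_subst_sumElim_var (t : L.Term α) (σ : β → L.Term α) :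
    (t.relabel Sum.inl).subst (Sum.elim Term.var σ) = t := by
  rw [subst_relabel, Sum.elim_comp_inl, subst_var]

theorem subst_func_single (f : L.Functions 1) (t : L.Term α) (σ : α → L.Term β) :
    (func f ![t]).subst σ = func f ![t.subst σ] := by
  simp only [subst, func.injEq, heq_eq_eq, true_and]
  funext i
  fin_cases i
  rfl

theorem varFinsetLeft_relabel_inl [DecidableEq α] (t : L.Term α) :
    (t.relabel (Sum.inl : α → α ⊕ β)).varFinsetLeft = t.varFinset := by
  induction t with
  | var => rfl
  | func f ts ih => simp [varFinsetLeft, varFinset, ih]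

@[simp]
theorem freeVarFinset_equal [DecidableEq α] (s t : L.Term α) :
    (s.equal t).freeVarFinset = s.varFinset ∪ t.varFinset := by
  simp [Term.equal, Term.bdEqual, BoundedFormula.freeVarFinset, varFinsetLeft_relabel_inl]

end FirstOrder.Language.Term

namespace PRFpaper

variable {L : FirstOrder.Language.{u, v}}

/-- `∃' eqBound t` is the formula `∃z (t = z)`. -/
def eqBound (t : L.Term ℕ) : L.BoundedFormula ℕ 1 :=
  BoundedFormula.equal (t.relabel Sum.inl) (Term.var (Sum.inr 0))

@[simp]
theorem freeVarFinset_eqBound (t : L.Term ℕ) : (eqBound t).freeVarFinset = t.varFinset := by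
  simp [eqBound, BoundedFormula.freeVarFinset, Term.varFinsetLeft_relabel_inl, Term.varFinsetLeft]

theorem inst1_equal (a b : L.Term (ℕ ⊕ Fin 1)) (u : L.Term ℕ) :
    inst1 L (BoundedFormula.equal a b) u =
      Term.equal (a.subst (Sum.elim Term.var fun _ => u))
        (b.subst (Sum.elim Term.var fun _ => u)) := by
  simp [inst1, BoundedFormula.subst, BoundedFormula.mapTermRel, Term.equal, Term.bdEqual,
    Term.subst_relabel, Term.relabel_subst]

theorem inst1_eqBound (t u : L.Term ℕ) : inst1 L (eqBound t) u = Term.equal t u := by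
  rw [eqBound, inst1_equal, Term.relabel_inl_subst_sumElim_var]
  rfl

/-- The substitution performed by `inst1` inside `∃z φ(x, z)`, where `x = Sum.inr 0` is
instantiated and `z = Sum.inr 1` becomes the only bound variable. -/
def instOuter (u : L.Term ℕ) : ℕ ⊕ Fin 2 → L.Term (ℕ ⊕ Fin 1) :=
  Sum.elim (Term.var ∘ Sum.inl) ![u.relabel Sum.inl, Term.var (Sum.inr 0)]

theorem inst1_ex_equal (t₁ t₂ : L.Term (ℕ ⊕ Fin 2)) (u : L.Term ℕ) :
    inst1 L (BoundedFormula.equal t₁ t₂).ex u =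
      (BoundedFormula.equal (t₁.subst (instOuter u)) (t₂.subst (instOuter u))).ex := by
  simp only [inst1, BoundedFormula.ex, BoundedFormula.not, BoundedFormula.toFormula,
    BoundedFormula.subst, BoundedFormula.mapTermRel, Term.equal, Term.bdEqual,
    BoundedFormula.relabel, Term.subst_relabel]
  congr 6 <;>
  · funext i
    rcases i with n | j
    · rfl
    · fin_cases j <;> rfl

theorem inst1_tot1 (f : L.Functions 1) (u : L.Term ℕ) :
    inst1 L (BoundedFormula.equal (Term.func f ![Term.var (Sum.inr 0)])
      (Term.var (Sum.inr 1))).ex u = (eqBound (Term.func f ![u])).ex := by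
  rw [inst1_ex_equal]
  simp [eqBound, instOuter]

theorem inst1_totComp (g h : L.Functions 1) (u : L.Term ℕ) :
    inst1 L (BoundedFormula.equal (Term.func h ![Term.func g ![Term.var (Sum.inr 0)] ])
      (Term.var (Sum.inr 1))).ex u = (eqBound (Term.func h ![Term.func g ![u] ])).ex := by
  rw [inst1_ex_equal]
  simp [eqBound, instOuter]

section Derivations

variable {B : L.Term ℕ → Prop} {T Γ : Set (L.Formula ℕ)}

theorem Prv.cut₂ {φ ψ χ : L.Formula ℕ} (h : Prv L B T (insert φ (insert ψ Γ)) χ)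
    (hφ : Prv L B T Γ φ) (hψ : Prv L B T Γ ψ) : Prv L B T Γ χ :=
  (h.impI.impI.impE hψ).impE hφ

theorem Prv.eq_symm {s t : L.Term ℕ} (h : Prv L B T Γ (Term.equal s t)) :
    Prv L B T Γ (Term.equal t s) := by
  have hφ : ∀ w, inst1 L (BoundedFormula.equal (Term.var (Sum.inr 0)) (s.relabel Sum.inl)) w =
      Term.equal w s := fun w => by
    rw [inst1_equal, Term.relabel_inl_subst_sumElim_var]; rfl
  have := h.eqSubst (by rw [hφ]; exact Prv.eqRefl Γ s)
  rwa [hφ] at this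

theorem Prv.func_eq_of_eq (f : L.Functions 1) {s t r : L.Term ℕ}
    (hst : Prv L B T Γ (Term.equal s t)) (ht : Prv L B T Γ (Term.equal (Term.func f ![t]) r)) :
    Prv L B T Γ (Term.equal (Term.func f ![s]) r) := by
  have hφ : ∀ w, inst1 L (BoundedFormula.equal (Term.func f ![Term.var (Sum.inr 0)])
      (r.relabel Sum.inl)) w = Term.equal (Term.func f ![w]) r := fun w => by
    rw [inst1_equal, Term.subst_func_single, Term.relabel_inl_subst_sumElim_var]; rfl
  have := hst.eq_symm.eqSubst (by rw [hφ]; exact ht)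
  rwa [hφ] at this

theorem Prv.exists_eq_of_tot1 {f : L.Functions 1} {u : L.Term ℕ} (hf : Prv L B T Γ (tot1 L f))
    (hu : B u) : Prv L B T Γ (eqBound (Term.func f ![u])).ex := by
  simpa [inst1_tot1] using hf.allE hu

theorem Prv.exists_eq_intro {t r : L.Term ℕ} (hr : B r) (h : Prv L B T Γ (Term.equal t r)) :
    Prv L B T Γ (eqBound t).ex :=
  Prv.exI hr (by rwa [inst1_eqBound])

theorem Prv.exists_eq_elim {t : L.Term ℕ} {C : L.Formula ℕ} (y : ℕ)
    (h : Prv L B T Γ (eqBound t).ex) (hC : Prv L B T (insert (Term.equal t (Term.var y)) Γ) C)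
    (hΓ : ∀ ψ ∈ Γ, y ∉ ψ.freeVarFinset) (ht : y ∉ t.varFinset)
    (hC' : y ∉ C.freeVarFinset) : Prv L B T Γ C :=
  Prv.exE h (by rwa [inst1_eqBound]) hΓ (by simpa [BoundedFormula.freeVarFinset]) hC'

end Derivations

/-- If totality of `g` and of `h` is provable with basic terms
(in particular in `A(PR)`, or from any theory `T`), then totality of the
composition `h ∘ g` is provable with basic terms:
`⊢_b ∀x ∃z (h(g(x)) = z)`. -/
theorem totality_of_composition_basic (L : FirstOrder.Language.{u, v})
    (c0 : L.Constants) (s1 : L.Functions 1) (g h : L.Functions 1)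
    (T : Set (L.Formula ℕ))
    (hg : Prv L (IsBasic L c0 s1) T ∅ (tot1 L g))
    (hh : Prv L (IsBasic L c0 s1) T ∅ (tot1 L h)) :
    Prv L (IsBasic L c0 s1) T ∅ (totComp L g h) := by
  -- the variables `x`, `y`, `z` of the argument are `Term.var 0`, `Term.var 1`, `Term.var 2`
  refine Prv.allI (y := 0) ?_ (by simp) (by simp)
  rw [inst1_totComp]
  refine Prv.cut₂ ?_ (hg.exists_eq_of_tot1 (IsBasic.var 0)) hh
  refine Prv.exists_eq_elim 1 (Prv.hyp (Set.mem_insert _ _)) ?_ (by simp [tot1]) (by simp)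
    (by simp)
  refine Prv.exists_eq_elim 2
    ((Prv.hyp (by simp : tot1 L h ∈ _)).exists_eq_of_tot1 (IsBasic.var 1)) ?_ (by simp [tot1])
    (by simp) (by simp)
  exact Prv.exists_eq_intro (IsBasic.var 2)
    (Prv.func_eq_of_eq h (t := Term.var 1) (Prv.hyp (by simp)) (Prv.hyp (by simp)))

end PRFpaper
end
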